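/- arXiv:1105.5032 — 3 statements merged into one kernel-verified Lean document; each statement's English description precedes it below -/
import Mathlib

section
/- Let C and A be disjoint finite candidate sets with |C| ≥ 2, let L be a linear order on C ∪ A, and let V be a finite collection of linear-order votes on C ∪ A, each single-caved with respect to L. Let p ∈ C. Then there exists a set A' ⊆ A such that p is a plurality winner of the election (C ∪ A', V) if and only if p is a plurality winner of the election (C, V). (In particular, adding candidates can never make a losing candidate into a plurality winner in a single-caved electorate.) -/
variable {α : Type*} [DecidableEq α]

/-- `l` is a linear-order vote on the finite candidate set `s`:
a duplicate-free list containing exactly the elements of `s`;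
earlier in the list means more preferred (for a societal axis `L`,
earlier in the list means smaller in the order `L`). -/
def IsVoteOn (s : Finset α) (l : List α) : Prop :=
  l.Nodup ∧ ∀ a, a ∈ l ↔ a ∈ s

/-- `a` is ranked strictly before `b` in the list `l`. -/
def Prefers (l : List α) (a b : α) : Prop :=
  l.idxOf a < l.idxOf b

instance (l : List α) (a b : α) : Decidable (Prefers l a b) :=
  inferInstanceAs (Decidable (_ < _))

/-- `v` is single-peaked with respect to the societal axis `L`. -/
def SinglePeaked (L v : List α) : Prop :=
  ∀ c1 c2 c3, c1 ∈ L → c2 ∈ L → c3 ∈ L →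
    ((Prefers L c1 c2 ∧ Prefers L c2 c3) ∨ (Prefers L c3 c2 ∧ Prefers L c2 c1)) →
    Prefers v c1 c2 → Prefers v c2 c3

/-- `v` is single-caved with respect to the societal axis `L`. -/
def SingleCaved (L v : List α) : Prop :=
  ∀ c1 c2 c3, c1 ∈ L → c2 ∈ L → c3 ∈ L →
    ((Prefers L c1 c2 ∧ Prefers L c2 c3) ∨ (Prefers L c3 c2 ∧ Prefers L c2 c1)) →
    Prefers v c2 c1 → Prefers v c3 c2

/-- The restriction of a ranking/order `l` to the subset `C` of candidates. -/
def restrictList (C : Finset α) (l : List α) : List α :=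
  l.filter (fun a => decide (a ∈ C))

/-- The plurality score of candidate `c` in the election with candidate set `C`
and votes `V` (each vote a linear order on a set containing `C`): the number of
votes whose most preferred candidate among `C` is `c`. -/
def pluralityScore (C : Finset α) (V : List (List α)) (c : α) : ℕ :=
  V.countP (fun v => decide ((restrictList C v).head? = some c))

/-- `p` is a plurality winner of the election `(C, V)`. -/
def PluralityWinner (C : Finset α) (V : List (List α)) (p : α) : Prop :=
  p ∈ C ∧ ∀ c ∈ C, pluralityScore C V c ≤ pluralityScore C V p

/-- `l'` is obtained from `l` by one swap of adjacent elements. -/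
def AdjSwap (l l' : List α) : Prop :=
  ∃ (u w : List α) (x y : α), l = u ++ x :: y :: w ∧ l' = u ++ y :: x :: w

/-- `WithinSwaps k l l'` : `l` can be transformed into `l'` by a sequence of at
most `k` adjacent swaps. -/
def WithinSwaps : ℕ → List α → List α → Prop
  | 0, l, l' => l = l'
  | (k+1), l, l' => l = l' ∨ ∃ l'', AdjSwap l l'' ∧ WithinSwaps k l'' l'

/-- `v` is swoon-SP w.r.t. axis `L` on candidate set `C`: the restriction of `v` to
`C` minus `v`'s most preferred candidate is single-peaked with respect to the
restriction of `L` to that set. -/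
def SwoonSP (C : Finset α) (L v : List α) : Prop :=
  ∀ t, v.head? = some t →
    SinglePeaked (restrictList (C.erase t) L) (restrictList (C.erase t) v)

/-- The `k`-radius neighborhood of `c` with respect to `C'` and the axis `L`:
if `C'`, listed in `L`-increasing order, is `d_1, ..., d_r` and `c = d_i`, this
is `{d_j : |i - j| ≤ k}`. -/
def nbhd (k : ℕ) (L : List α) (C' : Finset α) (c : α) : Finset α :=
  ((restrictList C' L).drop ((restrictList C' L).idxOf c - k)).take
    ((restrictList C' L).idxOf c + k + 1 - ((restrictList C' L).idxOf c - k))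
    |>.toFinset

/-- The plurality election `(C, V)` is `k`-local with respect to axis `L`. -/
def KLocal (k : ℕ) (L : List α) (C : Finset α) (V : List (List α)) : Prop :=
  ∀ C' ⊆ C, ∀ c ∈ C', pluralityScore (nbhd k L C' c) V c = pluralityScore C' V c

/-- In a `(a1, a2, 0)` scoring election over three candidates, the number of points
candidate `c` receives from (unit-weight) vote `v`. -/
def score3 (a1 a2 : ℕ) (v : List α) (c : α) : ℕ :=
  if v.idxOf c = 0 then a1 else if v.idxOf c = 1 then a2 else 0

/-- Indicator that the vote `v` does not veto (rank last) candidate `c`. -/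
def vetoInd (v : List α) (c : α) : ℕ :=
  if v.getLast? = some c then 0 else 1

/-- The approval score of `c` given approval ballots `W`. -/
def approvalScore {I : Type*} [Fintype I] (W : I → Finset α) (c : α) : ℕ :=
  (Finset.univ.filter fun i => c ∈ W i).card

/-- `p` is an approval winner of the election with candidate set `C` and ballots `W`. -/
def ApprovalWinner (C : Finset α) {I : Type*} [Fintype I] (W : I → Finset α) (p : α) : Prop :=
  p ∈ C ∧ ∀ c ∈ C, approvalScore W c ≤ approvalScore W p

/-! A single-caved voter's favourite among any candidate set `S` is one of the two
`L`-extremes of `S`, so a plurality winner `p` of `C ∪ A'` is the favourite of at least half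
of the voters. Deleting the candidates of `A'` can only raise `p`'s score, and any other
`c ∈ C` is the favourite only of voters who do not put `p` first, so `c` gets at most the
other half. -/

theorem List.exists_head?_eq_of_mem {α : Type*} {l : List α} {x : α} (hx : x ∈ l) :
    ∃ a, l.head? = some a :=
  Option.isSome_iff_exists.1 (List.isSome_head?.2 (List.ne_nil_of_mem hx))

theorem List.exists_getLast?_eq_of_mem {α : Type*} {l : List α} {x : α} (hx : x ∈ l) :
    ∃ b, l.getLast? = some b :=
  Option.isSome_iff_exists.1 (List.getLast?_isSome.2 (List.ne_nil_of_mem hx))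

theorem Prefers.asymm {l : List α} {a b : α} (h : Prefers l a b) : ¬Prefers l b a :=
  lt_asymm h

theorem List.Nodup.pairwise_prefers {l : List α} (hl : l.Nodup) : l.Pairwise (Prefers l) := by
  rw [List.pairwise_iff_getElem]
  intro i j _ _ hij
  simpa only [Prefers, hl.idxOf_getElem] using hij

theorem prefers_of_head?_eq {l : List α} (hl : l.Nodup) {m : List α} (hm : m.Sublist l)
    {a x : α} (ha : m.head? = some a) (hx : x ∈ m) (hxa : x ≠ a) : Prefers l a x := by
  obtain ⟨t, rfl⟩ := List.head?_eq_some_iff.1 ha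
  exact (List.pairwise_cons.1 (hl.pairwise_prefers.sublist hm)).1 x
    ((List.mem_cons.1 hx).resolve_left hxa)

theorem prefers_of_getLast?_eq {l : List α} (hl : l.Nodup) {m : List α} (hm : m.Sublist l)
    {b x : α} (hb : m.getLast? = some b) (hx : x ∈ m) (hxb : x ≠ b) : Prefers l x b := by
  obtain ⟨t, rfl⟩ := List.getLast?_eq_some_iff.1 hb
  have hxt : x ∈ t := by simpa [hxb] using hx
  exact (List.pairwise_append.1 (hl.pairwise_prefers.sublist hm)).2.2 x hxt b
    (List.mem_singleton_self b)

theorem mem_restrictList {S : Finset α} {l : List α} {x : α} :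
    x ∈ restrictList S l ↔ x ∈ l ∧ x ∈ S := by
  simp [restrictList]

theorem restrictList_sublist (S : Finset α) (l : List α) : (restrictList S l).Sublist l :=
  List.filter_sublist

theorem restrictList_restrictList_of_subset {C S : Finset α} (hCS : C ⊆ S) (l : List α) :
    restrictList C (restrictList S l) = restrictList C l := by
  simp only [restrictList, List.filter_filter]
  exact List.filter_congr fun a _ => by by_cases h : a ∈ C <;> simp [h, @hCS a]

theorem head?_restrictList_of_subset {C S : Finset α} (hCS : C ⊆ S) {l : List α} {p : α}
    (hp : p ∈ C) (h : (restrictList S l).head? = some p) :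
    (restrictList C l).head? = some p := by
  obtain ⟨t, ht⟩ := List.head?_eq_some_iff.1 h
  rw [← restrictList_restrictList_of_subset hCS, ht]
  simp [restrictList, hp]

theorem pluralityScore_le_of_subset {C S : Finset α} (hCS : C ⊆ S) (V : List (List α))
    {p : α} (hp : p ∈ C) : pluralityScore S V p ≤ pluralityScore C V p :=
  List.countP_mono_left fun v _ h => by
    simpa using head?_restrictList_of_subset hCS hp (by simpa using h)

theorem pluralityScore_add_pluralityScore_le_length (C : Finset α) (V : List (List α))
    {c p : α} (hcp : c ≠ p) : pluralityScore C V c + pluralityScore C V p ≤ V.length := by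
  rw [V.length_eq_countP_add_countP (fun v => (restrictList C v).head? = some c)]
  refine Nat.add_le_add_left (List.countP_mono_left fun v _ h => ?_) _
  simp_all [Ne.symm hcp]

theorem length_le_pluralityScore_add_pluralityScore {S : Finset α} {V : List (List α)}
    {a b : α}
    (h : ∀ v ∈ V, (restrictList S v).head? = some a ∨ (restrictList S v).head? = some b) :
    V.length ≤ pluralityScore S V a + pluralityScore S V b := by
  rw [V.length_eq_countP_add_countP (fun v => (restrictList S v).head? = some a)]
  refine Nat.add_le_add_left (List.countP_mono_left fun v hv hna => ?_) _
  simpa using (h v hv).resolve_left (by simpa using hna)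

theorem SingleCaved.head?_restrictList_eq_head?_or_getLast? {T S : Finset α} {L v : List α}
    (hL : IsVoteOn T L) (hv : IsVoteOn T v) (hsc : SingleCaved L v) {h : α}
    (hh : (restrictList S v).head? = some h) :
    (restrictList S L).head? = some h ∨ (restrictList S L).getLast? = some h := by
  have hhv := mem_restrictList.1 (List.mem_of_mem_head? hh)
  have hhL : h ∈ restrictList S L := mem_restrictList.2 ⟨(hL.2 h).2 ((hv.2 h).1 hhv.1), hhv.2⟩
  have mem_v : ∀ {x}, x ∈ restrictList S L → x ∈ restrictList S v := fun hx => by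
    rw [mem_restrictList] at hx ⊢
    exact ⟨(hv.2 _).2 ((hL.2 _).1 hx.1), hx.2⟩
  obtain ⟨a, ha⟩ := List.exists_head?_eq_of_mem hhL
  obtain ⟨b, hb⟩ := List.exists_getLast?_eq_of_mem hhL
  have haL := List.mem_of_mem_head? ha
  have hbL := List.mem_of_mem_getLast? hb
  by_contra! hne
  have hah : h ≠ a := fun e => hne.1 (e ▸ ha)
  have hbh : h ≠ b := fun e => hne.2 (e ▸ hb)
  have hLah : Prefers L a h := prefers_of_head?_eq hL.1 (restrictList_sublist S L) ha hhL hah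
  have hLhb : Prefers L h b := prefers_of_getLast?_eq hL.1 (restrictList_sublist S L) hb hhL hbh
  have hvha : Prefers v h a :=
    prefers_of_head?_eq hv.1 (restrictList_sublist S v) hh (mem_v haL) hah.symm
  have hvhb : Prefers v h b :=
    prefers_of_head?_eq hv.1 (restrictList_sublist S v) hh (mem_v hbL) hbh.symm
  exact hvhb.asymm <| hsc a h b (List.mem_of_mem_filter haL) (List.mem_of_mem_filter hhL)
    (List.mem_of_mem_filter hbL) (Or.inl ⟨hLah, hLhb⟩) hvha

theorem length_le_two_mul_pluralityScore {T S : Finset α} {L : List α} {V : List (List α)}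
    (hL : IsVoteOn T L) (hV : ∀ v ∈ V, IsVoteOn T v ∧ SingleCaved L v) (hST : S ⊆ T)
    {p : α} (hp : PluralityWinner S V p) : V.length ≤ 2 * pluralityScore S V p := by
  have hpL : p ∈ restrictList S L := mem_restrictList.2 ⟨(hL.2 p).2 (hST hp.1), hp.1⟩
  obtain ⟨a, ha⟩ := List.exists_head?_eq_of_mem hpL
  obtain ⟨b, hb⟩ := List.exists_getLast?_eq_of_mem hpL
  have top_mem_ends : ∀ v ∈ V,
      (restrictList S v).head? = some a ∨ (restrictList S v).head? = some b := by
    intro v hv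
    obtain ⟨hvT, hsc⟩ := hV v hv
    obtain ⟨h, hh⟩ := List.exists_head?_eq_of_mem <|
      mem_restrictList.2 ⟨(hvT.2 p).2 (hST hp.1), hp.1⟩
    rcases hsc.head?_restrictList_eq_head?_or_getLast? hL hvT hh with h' | h'
    · exact Or.inl (hh.trans (ha.symm.trans h').symm)
    · exact Or.inr (hh.trans (hb.symm.trans h').symm)
  calc V.length ≤ pluralityScore S V a + pluralityScore S V b :=
        length_le_pluralityScore_add_pluralityScore top_mem_ends
    _ ≤ pluralityScore S V p + pluralityScore S V p :=
        add_le_add (hp.2 a (mem_restrictList.1 (List.mem_of_mem_head? ha)).2)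
          (hp.2 b (mem_restrictList.1 (List.mem_of_mem_getLast? hb)).2)
    _ = 2 * pluralityScore S V p := (two_mul _).symm

theorem singleCaved_ccac_iff_already_winner_general
    (C A : Finset α)
    (L : List α) (hL : IsVoteOn (C ∪ A) L)
    (V : List (List α))
    (hV : ∀ v ∈ V, IsVoteOn (C ∪ A) v ∧ SingleCaved L v)
    (p : α) (hp : p ∈ C) :
    (∃ A' ⊆ A, PluralityWinner (C ∪ A') V p) ↔ PluralityWinner C V p := by
  refine ⟨fun ⟨A', hA', hwin⟩ => ⟨hp, fun c _ => ?_⟩,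
    fun hwin => ⟨∅, Finset.empty_subset A, by rwa [Finset.union_empty]⟩⟩
  have hhalf := length_le_two_mul_pluralityScore hL hV (Finset.union_subset_union_right hA') hwin
  have hdown := pluralityScore_le_of_subset Finset.subset_union_left V hp (S := C ∪ A')
  rcases eq_or_ne c p with rfl | hcp
  · exact le_rfl
  have hsplit := pluralityScore_add_pluralityScore_le_length C V hcp
  omega

/-- In a single-caved electorate, some subset `A'` of the spoiler
candidates `A` can be added so that `p` is a plurality winner of `(C ∪ A', V)`
if and only if `p` is already a plurality winner of `(C, V)`. -/
theorem singleCaved_ccac_iff_already_winner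
    (C A : Finset α) (hdisj : Disjoint C A) (hC : 2 ≤ C.card)
    (L : List α) (hL : IsVoteOn (C ∪ A) L)
    (V : List (List α))
    (hV : ∀ v ∈ V, IsVoteOn (C ∪ A) v ∧ SingleCaved L v)
    (p : α) (hp : p ∈ C) :
    (∃ A' ⊆ A, PluralityWinner (C ∪ A') V p) ↔ PluralityWinner C V p :=
  singleCaved_ccac_iff_already_winner_general C A L hL V hV p hp
end

section
/- Let C be a finite candidate set, L a linear order on C, k a nonnegative integer, and v a linear-order vote on C that is single-peaked with respect to some linear order L' on C that is within k adjacent swaps of L. Then for every subset C' ⊆ C, the restriction of v to C' is single-peaked with respect to some linear order on C' that is within k adjacent swaps of the restriction of L to C'. -/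
variable {α : Type*} [DecidableEq α]

/-!
Restriction to `C'` is list filtering. Filtering turns an adjacent swap into an adjacent swap or
into nothing, so it does not increase the swap distance, and it keeps the relative order of the
surviving candidates in the axis and in the vote alike; hence the restriction of the witnessing
axis `L'` witnesses the claim for `C'`.
-/

-- No `Nodup` is needed: filtering keeps the first occurrences of `a` and `b` in their order.
theorem prefers_filter_iff (p : α → Bool) (l : List α) {a b : α} (ha : p a) (hb : p b) :
    Prefers (l.filter p) a b ↔ Prefers l a b := by
  unfold Prefers
  induction l with
  | nil => rfl
  | cons c t ih =>
    by_cases hc : p c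
    · rw [List.filter_cons_of_pos hc]
      by_cases hac : c = a <;> by_cases hbc : c = b <;>
        simp_all [List.idxOf_cons_ne, List.idxOf_cons_self]
    · have hac : c ≠ a := by rintro rfl; exact hc ha
      have hbc : c ≠ b := by rintro rfl; exact hc hb
      rw [List.filter_cons_of_neg hc, List.idxOf_cons_ne _ hac, List.idxOf_cons_ne _ hbc]
      omega

theorem SinglePeaked.filter (p : α → Bool) {L v : List α} (h : SinglePeaked L v) :
    SinglePeaked (L.filter p) (v.filter p) := by
  intro c1 c2 c3 h1 h2 h3 hbetween hv12
  obtain ⟨h1, hp1⟩ := List.mem_filter.mp h1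
  obtain ⟨h2, hp2⟩ := List.mem_filter.mp h2
  obtain ⟨h3, hp3⟩ := List.mem_filter.mp h3
  simp only [prefers_filter_iff p _ hp1 hp2, prefers_filter_iff p _ hp2 hp3,
    prefers_filter_iff p _ hp2 hp1, prefers_filter_iff p _ hp3 hp2] at hbetween hv12 ⊢
  exact h c1 c2 c3 h1 h2 h3 hbetween hv12

omit [DecidableEq α] in
theorem AdjSwap.filter (p : α → Bool) {l l' : List α} (h : AdjSwap l l') :
    AdjSwap (l.filter p) (l'.filter p) ∨ l.filter p = l'.filter p := by
  obtain ⟨u, w, x, y, rfl, rfl⟩ := h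
  by_cases px : p x <;> by_cases py : p y
  · exact Or.inl ⟨u.filter p, w.filter p, x, y,
      by simp [List.filter_append, px, py], by simp [List.filter_append, px, py]⟩
  all_goals right; simp [List.filter_append, px, py]

omit [DecidableEq α] in
theorem WithinSwaps.succ {k : ℕ} {l l' : List α} (h : WithinSwaps k l l') :
    WithinSwaps (k + 1) l l' := by
  induction k generalizing l with
  | zero => exact Or.inl h
  | succ k ih =>
    rcases h with h | ⟨m, hm, hw⟩
    · exact Or.inl h
    · exact Or.inr ⟨m, hm, ih hw⟩

omit [DecidableEq α] in
theorem WithinSwaps.filter (p : α → Bool) {k : ℕ} {l l' : List α}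
    (h : WithinSwaps k l l') : WithinSwaps k (l.filter p) (l'.filter p) := by
  induction k generalizing l with
  | zero => exact congrArg _ h
  | succ k ih =>
    rcases h with h | ⟨m, hm, hw⟩
    · exact Or.inl (congrArg _ h)
    · rcases hm.filter p with hswap | heq
      · exact Or.inr ⟨m.filter p, hswap, ih hw⟩
      · exact heq ▸ (ih hw).succ

theorem IsVoteOn.restrictList {C C' : Finset α} {l : List α} (hl : IsVoteOn C l)
    (hC' : C' ⊆ C) : IsVoteOn C' (restrictList C' l) := by
  refine ⟨hl.1.filter _, fun a => ?_⟩
  simp only [_root_.restrictList, List.mem_filter, decide_eq_true_eq, hl.2 a]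
  exact ⟨And.right, fun ha => ⟨hC' ha, ha⟩⟩

theorem perceptionFlipSP_restriction_general
    (C : Finset α) (L v : List α) (k : ℕ)
    (h : ∃ L', IsVoteOn C L' ∧ WithinSwaps k L L' ∧ SinglePeaked L' v) :
    ∀ C' ⊆ C, ∃ M, IsVoteOn C' M ∧ WithinSwaps k (restrictList C' L) M ∧
      SinglePeaked M (restrictList C' v) := by
  intro C' hC'
  obtain ⟨L', hL', hW, hSP⟩ := h
  exact ⟨restrictList C' L', hL'.restrictList hC', hW.filter _, hSP.filter _⟩

/-- Being single-peaked w.r.t. some order within `k` adjacent swaps of the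
societal axis `L` is preserved under restriction to any subset `C'` of the candidates
(restricting both the vote and the societal axis). -/
theorem perceptionFlipSP_restriction
    (C : Finset α) (L v : List α) (k : ℕ)
    (hL : IsVoteOn C L) (hv : IsVoteOn C v)
    (h : ∃ L', IsVoteOn C L' ∧ WithinSwaps k L L' ∧ SinglePeaked L' v) :
    ∀ C' ⊆ C, ∃ M, IsVoteOn C' M ∧ WithinSwaps k (restrictList C' L) M ∧
      SinglePeaked M (restrictList C' v) :=
  perceptionFlipSP_restriction_general C L v k h
end

section
/- Let C be a finite candidate set, L a linear order on C, and c ∈ C a candidate such that at least two candidates are strictly below c in L and at least two candidates are strictly above c in L. Then no linear-order vote on C that is swoon-SP with respect to L ranks c last. -/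
/-! Let `t` be the top choice of `v`. One of the two candidates below `c` on the axis, say `a`,
differs from `t`; likewise some `b` above `c` differs from `t`, and `c ≠ t` since `c` is ranked
last and below `a`.
After deleting `t`, the vote still ranks `c` last, hence `a` above `c`; single-peakedness along
`a, c, b` then puts `c` above `b`, which is absurd. -/

variable {α : Type*} [DecidableEq α]

theorem Prefers.mem_left {l : List α} {a b : α} (h : Prefers l a b) : a ∈ l :=
  List.idxOf_lt_length_iff.mp (h.trans_le (List.idxOf_le_length))

theorem Prefers.ne {l : List α} {a b : α} (h : Prefers l a b) : a ≠ b :=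
  fun hab => (hab ▸ h).false

theorem Prefers.filter {p : α → Bool} {l : List α} {a b : α} (h : Prefers l a b)
    (ha : p a) (hb : p b) : Prefers (l.filter p) a b := by
  induction l with
  | nil => simp [Prefers] at h
  | cons x xs ih =>
    by_cases hxa : x = a
    · subst hxa
      simp only [Prefers, List.filter_cons_of_pos ha, List.idxOf_cons_self,
        List.idxOf_cons_ne (xs.filter p) h.ne]
      exact Nat.succ_pos _
    · have hxb : x ≠ b := by
        rintro rfl
        simp [Prefers] at h
      have hxs : Prefers xs a b := by
        simpa [Prefers, List.idxOf_cons_ne _ hxa, List.idxOf_cons_ne _ hxb] using h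
      rw [List.filter_cons]
      split
      · simpa [Prefers, List.idxOf_cons_ne _ hxa, List.idxOf_cons_ne _ hxb] using ih hxs
      · exact ih hxs

theorem prefers_of_getLast?_eq_some {l : List α} {a c : α} (hl : l.Nodup)
    (hc : l.getLast? = some c) (ha : a ∈ l) (hac : a ≠ c) : Prefers l a c := by
  obtain ⟨l', rfl⟩ := List.getLast?_eq_some_iff.mp hc
  have hcl' : c ∉ l' := fun h => List.disjoint_of_nodup_append hl h (List.mem_singleton_self c)
  have hal' : a ∈ l' := by simpa [hac] using ha
  unfold Prefers
  rw [List.idxOf_append_of_mem hal', List.idxOf_append_of_notMem hcl']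
  simpa using List.idxOf_lt_length_iff.mpr hal'

theorem SinglePeaked.getLast?_ne {L v : List α} {a b c : α} (hsp : SinglePeaked L v)
    (hv : v.Nodup) (hac : Prefers L a c) (hcb : Prefers L c b) (hbL : b ∈ L)
    (ha : a ∈ v) (hb : b ∈ v) : v.getLast? ≠ some c := by
  intro hlast
  have hcb_v : Prefers v c b := hsp a c b hac.mem_left hcb.mem_left hbL (.inl ⟨hac, hcb⟩)
    (prefers_of_getLast?_eq_some hv hlast ha hac.ne)
  exact lt_asymm hcb_v (prefers_of_getLast?_eq_some hv hlast hb hcb.ne.symm)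

theorem not_prefers_of_head?_eq_some {l : List α} {a t : α} (ht : l.head? = some t) :
    ¬Prefers l a t := by
  obtain ⟨l', rfl⟩ := List.head?_eq_some_iff.mp ht
  simp [Prefers]

theorem getLast?_filter_eq_some {β : Type*} {p : β → Bool} {l : List β} {c : β}
    (hc : l.getLast? = some c) (hpc : p c) : (l.filter p).getLast? = some c := by
  obtain ⟨l', rfl⟩ := List.getLast?_eq_some_iff.mp hc
  simp [List.filter_append, hpc]

theorem exists_ne_of_exists_pair {C : Finset α} {P : α → Prop}
    (h : ∃ a ∈ C, ∃ b ∈ C, a ≠ b ∧ P a ∧ P b) (t : α) : ∃ a ∈ C, a ≠ t ∧ P a := by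
  obtain ⟨a, haC, b, hbC, hab, hPa, hPb⟩ := h
  by_cases hat : a = t
  · exact ⟨b, hbC, hat ▸ hab.symm, hPb⟩
  · exact ⟨a, haC, hat, hPa⟩

theorem swoonSP_interior_never_vetoed_general
    (C : Finset α) (L : List α) (hL : IsVoteOn C L) (c : α)
    (hbelow : ∃ a ∈ C, ∃ b ∈ C, a ≠ b ∧ Prefers L a c ∧ Prefers L b c)
    (habove : ∃ a ∈ C, ∃ b ∈ C, a ≠ b ∧ Prefers L c a ∧ Prefers L c b)
    (v : List α) (hv : IsVoteOn C v) (hsw : SwoonSP C L v) :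
    v.getLast? ≠ some c := by
  intro hlast
  obtain ⟨t, ht⟩ := Option.isSome_iff_exists.mp
    (List.isSome_head?.mpr (List.ne_nil_of_mem (List.mem_of_getLast? hlast)))
  have hcC : c ∈ C := (hv.2 c).mp (List.mem_of_getLast? hlast)
  obtain ⟨a, haC, hat, hac⟩ := exists_ne_of_exists_pair hbelow t
  obtain ⟨b, hbC, hbt, hcb⟩ := exists_ne_of_exists_pair habove t
  have hct : c ≠ t := by
    rintro rfl
    exact not_prefers_of_head?_eq_some ht
      (prefers_of_getLast?_eq_some hv.1 hlast ((hv.2 a).mpr haC) hac.ne)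
  have hkept : ∀ x ∈ C, x ≠ t → decide (x ∈ C.erase t) :=
    fun x hx hxt => decide_eq_true (Finset.mem_erase.mpr ⟨hxt, hx⟩)
  exact (hsw t ht).getLast?_ne (hv.1.filter _)
    (hac.filter (hkept a haC hat) (hkept c hcC hct))
    (hcb.filter (hkept c hcC hct) (hkept b hbC hbt))
    (List.mem_filter.mpr ⟨(hL.2 b).mpr hbC, hkept b hbC hbt⟩)
    (List.mem_filter.mpr ⟨(hv.2 a).mpr haC, hkept a haC hat⟩)
    (List.mem_filter.mpr ⟨(hv.2 b).mpr hbC, hkept b hbC hbt⟩)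
    (getLast?_filter_eq_some hlast (hkept c hcC hct))

/-- If at least two candidates lie strictly below `c` in the axis `L` and
at least two lie strictly above, then no swoon-SP vote ranks `c` last. -/
theorem swoonSP_interior_never_vetoed
    (C : Finset α) (L : List α) (hL : IsVoteOn C L) (c : α) (hc : c ∈ C)
    (hbelow : ∃ a ∈ C, ∃ b ∈ C, a ≠ b ∧ Prefers L a c ∧ Prefers L b c)
    (habove : ∃ a ∈ C, ∃ b ∈ C, a ≠ b ∧ Prefers L c a ∧ Prefers L c b)
    (v : List α) (hv : IsVoteOn C v) (hsw : SwoonSP C L v) :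
    v.getLast? ≠ some c :=
  swoonSP_interior_never_vetoed_general C L hL c hbelow habove v hv hsw
end
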